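/- arXiv:2304.01363 — 4 statements merged into one kernel-verified Lean document; each statement's English description precedes it below -/
import Mathlib

section
/- Nonidentifiability under C3 violation, reduced system: for any reals 0 ≤ θ₁⁻ < θ₁⁺ ≤ 1, 0 ≤ θ₂⁻ < θ₂⁺ ≤ 1 and positive ρ₁, ρ₂, the system in unknowns (θ̄₁⁻, θ̄₂⁻, u, v, w): u + v + w = 1 + ρ₁ + ρ₂; uθ̄₁⁻ + vθ₁⁺ + wθ̄₁⁻ = θ₁⁻ + ρ₁θ₁⁺ + ρ₂θ₁⁻; uθ̄₂⁻ + vθ̄₂⁻ + wθ₂⁺ = θ₂⁻ + ρ₁θ₂⁻ + ρ₂θ₂⁺; uθ̄₁⁻θ̄₂⁻ + vθ₁⁺θ̄₂⁻ + wθ̄₁⁻θ₂⁺ = θ₁⁻θ₂⁻ + ρ₁θ₁⁺θ₂⁻ + ρ₂θ₁⁻θ₂⁺, admits a solution with (θ̄₁⁻, θ̄₂⁻, u, v, w) ≠ (θ₁⁻, θ₂⁻, 1, ρ₁, ρ₂). -/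
/-- Nonidentifiability under C3 violation, reduced system: for
`0 ≤ θ₁⁻ < θ₁⁺ ≤ 1`, `0 ≤ θ₂⁻ < θ₂⁺ ≤ 1` and `ρ₁, ρ₂ > 0`, the four-equation system
in unknowns `(θ̄₁⁻, θ̄₂⁻, u, v, w)` admits a solution different from
`(θ₁⁻, θ₂⁻, 1, ρ₁, ρ₂)`. -/
theorem stmt_7 (θ1m θ1p θ2m θ2p ρ1 ρ2 : ℝ)
    (h1 : 0 ≤ θ1m) (h1' : θ1m < θ1p) (h1'' : θ1p ≤ 1)
    (h2 : 0 ≤ θ2m) (h2' : θ2m < θ2p) (h2'' : θ2p ≤ 1)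
    (hρ1 : 0 < ρ1) (hρ2 : 0 < ρ2) :
    ∃ a b u v w : ℝ,
      (u + v + w = 1 + ρ1 + ρ2 ∧
       u * a + v * θ1p + w * a = θ1m + ρ1 * θ1p + ρ2 * θ1m ∧
       u * b + v * b + w * θ2p = θ2m + ρ1 * θ2m + ρ2 * θ2p ∧
       u * (a * b) + v * (θ1p * b) + w * (a * θ2p)
         = θ1m * θ2m + ρ1 * (θ1p * θ2m) + ρ2 * (θ1m * θ2p)) ∧
      ¬(a = θ1m ∧ b = θ2m ∧ u = 1 ∧ v = ρ1 ∧ w = ρ2) := by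
  set S : ℝ := 1 + ρ1 + ρ2 with hS
  set A : ℝ := θ1m + ρ1 * θ1p + ρ2 * θ1m with hA
  set B : ℝ := θ2m + ρ1 * θ2m + ρ2 * θ2p with hB
  set C : ℝ := θ1m * θ2m + ρ1 * (θ1p * θ2m) + ρ2 * (θ1m * θ2p) with hC
  have hSpos : (0:ℝ) < S := by rw [hS]; linarith
  have hDpos : (0:ℝ) < S * θ2p - B := by
    have : S * θ2p - B = (1 + ρ1) * (θ2p - θ2m) := by rw [hS, hB]; ring
    rw [this]; nlinarith
  set a : ℝ := 1 + max θ1p (max (A / S) (max ((A * θ2p - C) / (S * θ2p - B)) θ1m)) with haa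
  have ha1 : θ1p < a := by
    have := le_max_left θ1p (max (A / S) (max ((A * θ2p - C) / (S * θ2p - B)) θ1m))
    rw [haa]; linarith
  have ha2 : A / S < a := by
    have h := (le_max_left (A / S) (max ((A * θ2p - C) / (S * θ2p - B)) θ1m)).trans
      (le_max_right θ1p _)
    rw [haa]; linarith
  have ha3 : (A * θ2p - C) / (S * θ2p - B) < a := by
    have h := ((le_max_left ((A * θ2p - C) / (S * θ2p - B)) θ1m).trans
      (le_max_right (A / S) _)).trans (le_max_right θ1p _)
    rw [haa]; linarith
  have ha4 : θ1m < a := by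
    have h := ((le_max_right ((A * θ2p - C) / (S * θ2p - B)) θ1m).trans
      (le_max_right (A / S) _)).trans (le_max_right θ1p _)
    rw [haa]; linarith
  have hden1 : θ1p - a ≠ 0 := by intro h; linarith [ha1, sub_eq_zero.mp h]
  have hAS : A - a * S ≠ 0 := by
    have : A < a * S := by
      have := (div_lt_iff₀ hSpos).mp ha2
      linarith
    linarith
  set v : ℝ := (A - a * S) / (θ1p - a) with hv0
  set b : ℝ := (C - a * B) / (A - a * S) with hb0
  have hv : v * (θ1p - a) = A - a * S := div_mul_cancel₀ _ hden1
  have hb : b * (A - a * S) = C - a * B := div_mul_cancel₀ _ hAS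
  have hden2 : θ2p - b ≠ 0 := by
    intro h
    have hbe : b = θ2p := by linarith [sub_eq_zero.mp h]
    have hnum : a * (S * θ2p - B) > A * θ2p - C := (div_lt_iff₀ hDpos).mp ha3
    rw [hbe] at hb
    nlinarith
  set w : ℝ := (B - b * S) / (θ2p - b) with hw0
  have hw : w * (θ2p - b) = B - b * S := div_mul_cancel₀ _ hden2
  refine ⟨a, b, S - v - w, v, w, ⟨by rw [hS]; ring, ?_, ?_, ?_⟩, ?_⟩
  · have : (S - v - w) * a + v * θ1p + w * a = A := by linear_combination hv
    rw [hA] at this; exact this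
  · have : (S - v - w) * b + v * b + w * θ2p = B := by linear_combination hw
    rw [hB] at this; exact this
  · have heq2 : (S - v - w) * a + v * θ1p + w * a = A := by linear_combination hv
    have : (S - v - w) * (a * b) + v * (θ1p * b) + w * (a * θ2p) = C := by
      linear_combination b * heq2 + a * hw + hb
    rw [hC] at this; exact this
  · rintro ⟨h, -⟩
    exact absurd h (ne_of_gt ha4)
end

section
/- In the sequential DINA model, if β_{j,1}⁻ = 0 for all items j and the Q¹-matrix (rows q_{j,1}) contains no row equal to e₁, then the attribute profiles 0 and e₁ give zero probability of any nonzero response to every item, so the joint response distribution depends on (p_0, p_{e₁}) only through p_0 + p_{e₁}; hence these parameters are not identifiable. -/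
/-- `α` masters the requirements `q`: `α ⪰ q` coordinatewise. -/
def seqCapable {K : ℕ} (q α : Fin K → Bool) : Prop := ∀ k, q k = true → α k = true

instance {K : ℕ} (q α : Fin K → Bool) : Decidable (seqCapable q α) := by
  unfold seqCapable; infer_instance

/-- Conditional continuation probability `P(R_j ≥ l | R_j ≥ l-1, α)` in the
sequential DINA model. -/
def seqCont {J K : ℕ} (q : Fin J → ℕ → Fin K → Bool) (βp βm : Fin J → ℕ → ℝ)
    (α : Fin K → Bool) (j : Fin J) (l : ℕ) : ℝ :=
  if seqCapable (q j l) α then βp j l else βm j l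

/-- `P(R_j ≥ r | α) = ∏_{l=1}^r` continuation probabilities. -/
def seqCum {J K : ℕ} (q : Fin J → ℕ → Fin K → Bool) (βp βm : Fin J → ℕ → ℝ)
    (α : Fin K → Bool) (j : Fin J) (r : ℕ) : ℝ :=
  ∏ l ∈ Finset.Icc 1 r, seqCont q βp βm α j l

/-- `P(R_j = r | α)`, with the top continuation probability `S(H_j + 1) = 0`. -/
def seqCat {J K : ℕ} (H : Fin J → ℕ) (q : Fin J → ℕ → Fin K → Bool)
    (βp βm : Fin J → ℕ → ℝ) (α : Fin K → Bool) (j : Fin J) (r : ℕ) : ℝ :=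
  seqCum q βp βm α j r * (1 - if r < H j then seqCont q βp βm α j (r + 1) else 0)

/-- Joint conditional probability of the response vector `r` given `α`. -/
def seqJoint {J K : ℕ} (H : Fin J → ℕ) (q : Fin J → ℕ → Fin K → Bool)
    (βp βm : Fin J → ℕ → ℝ) (α : Fin K → Bool) (r : Fin J → ℕ) : ℝ :=
  ∏ j, seqCat H q βp βm α j (r j)

/-!
An examinee who lacks the first-category requirement of item `j` cannot pass category 1,
since `β_{j,1}⁻ = 0`; so such a profile answers `0` to item `j` with probability one. When
no `q_{j,1}` is `0` or `e₁`, both profiles `0` and `e₁` fail every first category, hence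
have the same conditional response distribution (a point mass at the zero response), and
mass can be moved freely between `p_0` and `p_{e₁}`.
-/

section Capability

variable {K : ℕ}

theorem seqCapable_iff_le {q α : Fin K → Bool} : seqCapable q α ↔ q ≤ α := by
  simp only [seqCapable, Pi.le_def, Bool.le_iff_imp]

theorem seqCapable_zero_iff {q : Fin K → Bool} :
    seqCapable q (fun _ => false) ↔ q = fun _ => false :=
  seqCapable_iff_le.trans le_bot_iff

theorem seqCapable_firstUnit_iff {q : Fin K → Bool} :
    seqCapable q (fun k => decide ((k : ℕ) = 0)) ↔
      q = (fun _ => false) ∨ q = fun (k : Fin K) => decide ((k : ℕ) = 0) := by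
  constructor
  · intro hq
    by_cases hzero : q = fun _ => false
    · exact Or.inl hzero
    obtain ⟨k₀, hk₀⟩ : ∃ k, q k = true := by
      by_contra! h
      exact hzero (funext fun k => by simpa using h k)
    have hk₀_val : (k₀ : ℕ) = 0 := by simpa using hq k₀ hk₀
    refine Or.inr (funext fun k => ?_)
    by_cases hk : (k : ℕ) = 0
    · rw [Fin.ext (hk.trans hk₀_val.symm), hk₀, hk₀_val]; rfl
    · simpa [hk] using mt (hq k) (by simpa using hk)
  · rintro (rfl | rfl) <;> intro k hk
    · exact absurd hk Bool.false_ne_true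
    · exact hk

end Capability

section SequentialDINA

variable {J K : ℕ} {H : Fin J → ℕ} {q : Fin J → ℕ → Fin K → Bool} {βp βm : Fin J → ℕ → ℝ}

theorem seqCat_of_not_seqCapable {α : Fin K → Bool} {j : Fin J}
    (hα : ¬ seqCapable (q j 1) α) (hβ : βm j 1 = 0) (r : ℕ) :
    seqCat H q βp βm α j r = if r = 0 then 1 else 0 := by
  have hcont : seqCont q βp βm α j 1 = 0 := by simp [seqCont, hα, hβ]
  cases r with
  | zero => simp [seqCat, seqCum, hcont]
  | succ r =>
    have hcum : seqCum q βp βm α j (r + 1) = 0 :=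
      Finset.prod_eq_zero (Finset.mem_Icc.mpr ⟨le_rfl, by omega⟩) hcont
    simp [seqCat, hcum]

theorem seqJoint_eq_of_not_seqCapable {α α' : Fin K → Bool}
    (hα : ∀ j, ¬ seqCapable (q j 1) α) (hα' : ∀ j, ¬ seqCapable (q j 1) α')
    (hβ : ∀ j, βm j 1 = 0) (r : Fin J → ℕ) :
    seqJoint H q βp βm α r = seqJoint H q βp βm α' r :=
  Finset.prod_congr rfl fun j _ => by
    rw [seqCat_of_not_seqCapable (hα j) (hβ j), seqCat_of_not_seqCapable (hα' j) (hβ j)]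

end SequentialDINA

section Mixtures

variable {ι : Type*} [Fintype ι] {a b : ι}

theorem sum_mul_eq_of_eq_off_pair {R : Type*} [CommRing R] {f p p' : ι → R}
    (hab : a ≠ b) (hf : f a = f b) (hoff : ∀ i, i ≠ a → i ≠ b → p i = p' i)
    (hsum : p a + p b = p' a + p' b) :
    ∑ i, p i * f i = ∑ i, p' i * f i := by
  rw [← sub_eq_zero, ← Finset.sum_sub_distrib,
    Fintype.sum_eq_add a b hab fun i hi => by rw [hoff i hi.1 hi.2, sub_self], hf]
  linear_combination f b * hsum

/-- The uniform distribution, and its perturbation moving half of the mass of `b` to `a`. -/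
theorem exists_ne_pos_distribs_eq_off_pair [DecidableEq ι] (hab : a ≠ b) :
    ∃ p p' : ι → ℝ, p ≠ p' ∧ (∀ i, 0 < p i) ∧ (∀ i, 0 < p' i) ∧
      ∑ i, p i = 1 ∧ ∑ i, p' i = 1 ∧
      (∀ i, i ≠ a → i ≠ b → p i = p' i) ∧ p a + p b = p' a + p' b := by
  have : Nonempty ι := ⟨a⟩
  set c : ℝ := (Fintype.card ι : ℝ)⁻¹
  have hcard : (Fintype.card ι : ℝ) ≠ 0 := Nat.cast_ne_zero.mpr Fintype.card_ne_zero
  have hc : 0 < c := inv_pos.mpr (Nat.cast_pos.mpr Fintype.card_pos)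
  have huniform : ∑ _i : ι, c = 1 := by
    rw [Finset.sum_const, Finset.card_univ, nsmul_eq_mul, mul_inv_cancel₀ hcard]
  refine ⟨fun _ => c,
    fun i => c + c / 2 * ((Pi.single a 1 : ι → ℝ) i - (Pi.single b 1 : ι → ℝ) i), fun h => ?_, fun _ => hc, fun i => ?_, huniform, ?_, fun i ha hb => ?_, ?_⟩
  · have ha := congrFun h a
    simp only [Pi.single_eq_same, Pi.single_eq_of_ne hab] at ha
    linarith
  · have ha : (0 : ℝ) ≤ (Pi.single a 1 : ι → ℝ) i := by
      rw [Pi.single_apply]; split_ifs <;> norm_num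
    have hb : (Pi.single b 1 : ι → ℝ) i ≤ 1 := by
      rw [Pi.single_apply]; split_ifs <;> norm_num
    nlinarith
  · simp [Finset.sum_add_distrib, Finset.sum_sub_distrib, ← Finset.mul_sum, huniform]
  · simp [Pi.single_eq_of_ne ha, Pi.single_eq_of_ne hb]
  · simp only [Pi.single_eq_same, Pi.single_eq_of_ne hab, Pi.single_eq_of_ne hab.symm]
    ring

end Mixtures

theorem stmt_9_general (J K : ℕ) (hK : 0 < K)
    (H : Fin J → ℕ)
    (q : Fin J → ℕ → Fin K → Bool) (βp βm : Fin J → ℕ → ℝ)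
    (hβm1 : ∀ j, βm j 1 = 0)
    (hq0 : ∀ j, q j 1 ≠ (fun _ => false))
    (hqe1 : ∀ j, q j 1 ≠ (fun (k : Fin K) => decide ((k : ℕ) = 0))) :
    (∀ j : Fin J, ∀ r, 1 ≤ r → r ≤ H j →
      seqCat H q βp βm (fun _ => false) j r = 0 ∧
      seqCat H q βp βm (fun k => decide ((k : ℕ) = 0)) j r = 0) ∧
    (∀ p pbar : (Fin K → Bool) → ℝ,
      (∀ α : Fin K → Bool, α ≠ (fun _ => false) → α ≠ (fun (k : Fin K) => decide ((k : ℕ) = 0)) →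
        p α = pbar α) →
      p (fun _ => false) + p (fun k => decide ((k : ℕ) = 0))
        = pbar (fun _ => false) + pbar (fun k => decide ((k : ℕ) = 0)) →
      ∀ r : Fin J → ℕ,
        (∑ α, p α * seqJoint H q βp βm α r)
          = ∑ α, pbar α * seqJoint H q βp βm α r) ∧
    (∃ p pbar : (Fin K → Bool) → ℝ, p ≠ pbar ∧
      (∀ α, 0 < p α) ∧ (∀ α, 0 < pbar α) ∧
      (∑ α, p α) = 1 ∧ (∑ α, pbar α) = 1 ∧
      ∀ r : Fin J → ℕ,
        (∑ α, p α * seqJoint H q βp βm α r)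
          = ∑ α, pbar α * seqJoint H q βp βm α r) := by
  have hne : (fun _ => false : Fin K → Bool) ≠ fun (k : Fin K) => decide ((k : ℕ) = 0) :=
    fun h => by simpa using congrFun h ⟨0, hK⟩
  have hzero : ∀ j, ¬ seqCapable (q j 1) fun _ => false :=
    fun j h => hq0 j (seqCapable_zero_iff.mp h)
  have hunit : ∀ j, ¬ seqCapable (q j 1) fun k => decide ((k : ℕ) = 0) :=
    fun j h => (seqCapable_firstUnit_iff.mp h).elim (hq0 j) (hqe1 j)
  have hmix := fun (p pbar : (Fin K → Bool) → ℝ) hoff hsum (r : Fin J → ℕ) =>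
    sum_mul_eq_of_eq_off_pair (f := (seqJoint H q βp βm · r)) (p := p) (p' := pbar) hne
      (seqJoint_eq_of_not_seqCapable hzero hunit hβm1 r) hoff hsum
  refine ⟨fun j r hr _ => ?_, hmix, ?_⟩
  · rw [seqCat_of_not_seqCapable (hzero j) (hβm1 j), seqCat_of_not_seqCapable (hunit j) (hβm1 j),
      if_neg (by omega)]
    exact ⟨rfl, rfl⟩
  · obtain ⟨p, pbar, hp, hpos, hpos', hp1, hp1', hoff, hsum⟩ :=
      exists_ne_pos_distribs_eq_off_pair hne
    exact ⟨p, pbar, hp, hpos, hpos', hp1, hp1', hmix p pbar hoff hsum⟩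

/-- In the sequential DINA model, if `β_{j,1}⁻ = 0` for all items and no first-category
q-vector equals `e₁` (first-category q-vectors being nonzero), then the profiles `0`
and `e₁` give zero probability of any nonzero response; the joint response
distribution depends on `(p_0, p_{e₁})` only through `p_0 + p_{e₁}`; hence the
parameters are not identifiable. -/
theorem stmt_9 (J K : ℕ) (hJ : 0 < J) (hK : 0 < K)
    (H : Fin J → ℕ) (hH : ∀ j, 1 ≤ H j)
    (q : Fin J → ℕ → Fin K → Bool) (βp βm : Fin J → ℕ → ℝ)
    (hβ : ∀ j l, 1 ≤ l → l ≤ H j → 0 ≤ βm j l ∧ βm j l < βp j l ∧ βp j l ≤ 1)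
    (hβm1 : ∀ j, βm j 1 = 0)
    (hq0 : ∀ j, q j 1 ≠ (fun _ => false))
    (hqe1 : ∀ j, q j 1 ≠ (fun (k : Fin K) => decide ((k : ℕ) = 0))) :
    (∀ j : Fin J, ∀ r, 1 ≤ r → r ≤ H j →
      seqCat H q βp βm (fun _ => false) j r = 0 ∧
      seqCat H q βp βm (fun k => decide ((k : ℕ) = 0)) j r = 0) ∧
    (∀ p pbar : (Fin K → Bool) → ℝ,
      (∀ α : Fin K → Bool, α ≠ (fun _ => false) → α ≠ (fun (k : Fin K) => decide ((k : ℕ) = 0)) →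
        p α = pbar α) →
      p (fun _ => false) + p (fun k => decide ((k : ℕ) = 0))
        = pbar (fun _ => false) + pbar (fun k => decide ((k : ℕ) = 0)) →
      ∀ r : Fin J → ℕ,
        (∑ α, p α * seqJoint H q βp βm α r)
          = ∑ α, pbar α * seqJoint H q βp βm α r) ∧
    (∃ p pbar : (Fin K → Bool) → ℝ, p ≠ pbar ∧
      (∀ α, 0 < p α) ∧ (∀ α, 0 < pbar α) ∧
      (∑ α, p α) = 1 ∧ (∑ α, pbar α) = 1 ∧
      ∀ r : Fin J → ℕ,
        (∑ α, p α * seqJoint H q βp βm α r)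
          = ∑ α, pbar α * seqJoint H q βp βm α r) :=
  stmt_9_general J K hK H q βp βm hβm1 hq0 hqe1
end

section
/- Key factoring step in proof of Theorem 2 (Case 2): under the setup of the previous lemma but with the reversed implication ξ(α) = 1 ⇒ ξ'(α) = 1, the two equations b⁺·∑_α (β̄(α) − β(α)) t(α) p_α = 0 and ∑_α c(α)(β̄(α) − β(α)) t(α) p_α = 0 imply (b⁺ − b⁻)(β̄⁻ − β⁻)·∑_{α: ξ'(α)=0} t(α) p_α = 0, hence β̄⁻ = β⁻ whenever ∑_{α: ξ'(α)=0} t(α) p_α > 0. -/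
/-- Key factoring step in the proof of Theorem 2 (Case 2): with the reversed implication
`ξ(α) = 1 ⇒ ξ'(α) = 1`, the two equations imply
`(b⁺ - b⁻)(β̄⁻ - β⁻) ∑_{α : ξ'(α)=0} t(α) p(α) = 0`, hence `β̄⁻ = β⁻` whenever the
sum is positive. -/
theorem stmt_12 {A : Type*} [Fintype A]
    (p t : A → ℝ) (ξ ξ' : A → Bool)
    (hp : ∀ a, 0 < p a) (ht : ∀ a, 0 ≤ t a)
    (himp : ∀ a, ξ a = true → ξ' a = true)
    (bm bp βp βbp βm βbm : ℝ)
    (hb0 : 0 ≤ bm) (hb : bm < bp) (hb1 : bp ≤ 1)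
    (h1 : bp * ∑ a, ((if ξ a then βbp else βbm) - (if ξ a then βp else βm))
            * t a * p a = 0)
    (h2 : ∑ a, (if ξ' a then bp else bm)
            * ((if ξ a then βbp else βbm) - (if ξ a then βp else βm))
            * t a * p a = 0) :
    (bp - bm) * (βbm - βm)
        * (∑ a ∈ Finset.univ.filter (fun a => ξ' a = false), t a * p a) = 0 ∧
    (0 < (∑ a ∈ Finset.univ.filter (fun a => ξ' a = false), t a * p a) →
      βbm = βm) := by
  have h3 : ∑ a, (bp - (if ξ' a then bp else bm))
      * ((if ξ a then βbp else βbm) - (if ξ a then βp else βm)) * t a * p a = 0 := by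
    have : ∑ a, (bp - (if ξ' a then bp else bm))
        * ((if ξ a then βbp else βbm) - (if ξ a then βp else βm)) * t a * p a
        = bp * (∑ a, ((if ξ a then βbp else βbm) - (if ξ a then βp else βm))
            * t a * p a)
          - ∑ a, (if ξ' a then bp else bm)
            * ((if ξ a then βbp else βbm) - (if ξ a then βp else βm)) * t a * p a := by
      rw [Finset.mul_sum, ← Finset.sum_sub_distrib]
      exact Finset.sum_congr rfl fun a _ => by ring
    rw [this, h1, h2, sub_zero]
  have heq : (bp - bm) * (βbm - βm)
      * (∑ a ∈ Finset.univ.filter (fun a => ξ' a = false), t a * p a)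
      = ∑ a, (bp - (if ξ' a then bp else bm))
        * ((if ξ a then βbp else βbm) - (if ξ a then βp else βm)) * t a * p a := by
    rw [Finset.mul_sum, Finset.sum_filter]
    refine Finset.sum_congr rfl fun a _ => ?_
    by_cases h' : ξ' a = true
    · simp [h']
    · have hξ : ξ a = false := by
        cases hx : ξ a
        · rfl
        · exact absurd (himp a hx) h'
      simp only [Bool.not_eq_true] at h'
      simp [h', hξ]
      ring
  have key := heq.trans h3
  refine ⟨key, fun hpos => ?_⟩
  have h4 : (bp - bm) * (βbm - βm) = 0 := by
    rcases mul_eq_zero.mp key with h | h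
    · exact h
    · exact absurd h (ne_of_gt hpos)
  rcases mul_eq_zero.mp h4 with h | h
  · linarith
  · linarith
end

section
/- Removing unconstrained items preserves the identifiability equation system: suppose for each j in a subset Δ the row T_{l e_j} of the marginal probability matrix is the constant vector θ_{j,l}⁺·1 (because q_j = 0). If p and p̄ are probability vectors (entries summing to 1) and T p = T̄ p̄ holds for all rows indexed by responses supported on Δ alone, then θ_{j,l}⁺ = θ̄_{j,l}⁺ for all j ∈ Δ, l; moreover for any response r, the equation T_r p = T̄_r p̄ is equivalent to T_{r'} p = T̄_{r'} p̄ where r' zeroes out the Δ-coordinates of r. -/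
/-- Removing unconstrained items preserves the identifiability equation system: if for
each `j ∈ Δ` the single-item rows are constant (`T_{l e_j} = θ_{j,l}⁺ · 1`), `p, p̄`
sum to one, and `T p = T̄ p̄` holds for all rows indexed by responses supported on `Δ`
alone, then `θ_{j,l}⁺ = θ̄_{j,l}⁺` for `j ∈ Δ`, and for any response `r`, the equation
`T_r p = T̄_r p̄` is equivalent to the one for `r'` obtained by zeroing out the
`Δ`-coordinates of `r`. -/
theorem stmt_13 {A : Type*} [Fintype A] (J : ℕ)
    (Tsingle Tbsingle : Fin J → ℕ → A → ℝ)
    (θp θbp : Fin J → ℕ → ℝ)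
    (Δ : Finset (Fin J))
    (p pbar : A → ℝ)
    (hp : ∀ α, 0 < p α) (hpbar : ∀ α, 0 < pbar α)
    (hp1 : (∑ α, p α) = 1) (hpbar1 : (∑ α, pbar α) = 1)
    (hθ : ∀ j ∈ Δ, ∀ l, 1 ≤ l → 0 < θp j l ∧ 0 < θbp j l)
    (hconst : ∀ j ∈ Δ, ∀ l, 1 ≤ l →
      (∀ α, Tsingle j l α = θp j l) ∧ (∀ α, Tbsingle j l α = θbp j l))
    (T Tb : (Fin J → ℕ) → A → ℝ)
    (hT : ∀ r α, T r α
      = ∏ j ∈ Finset.univ.filter (fun j => r j ≠ 0), Tsingle j (r j) α)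
    (hTb : ∀ r α, Tb r α
      = ∏ j ∈ Finset.univ.filter (fun j => r j ≠ 0), Tbsingle j (r j) α)
    (hΔeq : ∀ r : Fin J → ℕ, (∀ j, r j ≠ 0 → j ∈ Δ) →
      (∑ α, T r α * p α) = ∑ α, Tb r α * pbar α) :
    (∀ j ∈ Δ, ∀ l, 1 ≤ l → θp j l = θbp j l) ∧
    (∀ r : Fin J → ℕ,
      ((∑ α, T r α * p α) = (∑ α, Tb r α * pbar α)) ↔
      ((∑ α, T (fun j => if j ∈ Δ then 0 else r j) α * p α)
        = ∑ α, Tb (fun j => if j ∈ Δ then 0 else r j) α * pbar α)) := by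
  have key : ∀ j ∈ Δ, ∀ l, 1 ≤ l → θp j l = θbp j l := by
    intro j hj l hl
    set r : Fin J → ℕ := fun j' => if j' = j then l else 0 with hr
    have hsupp : ∀ j', r j' ≠ 0 → j' ∈ Δ := by
      intro j' h
      by_cases hjj : j' = j
      · exact hjj ▸ hj
      · simp [hr, hjj] at h
    have hfil : Finset.univ.filter (fun j' => r j' ≠ 0) = {j} := by
      ext j'
      by_cases hjj : j' = j <;> simp [hr, hjj, Nat.one_le_iff_ne_zero.mp hl]
    have hTr : ∀ α, T r α = θp j l := by
      intro α
      rw [hT, hfil, Finset.prod_singleton]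
      simp [hr, (hconst j hj l hl).1 α]
    have hTbr : ∀ α, Tb r α = θbp j l := by
      intro α
      rw [hTb, hfil, Finset.prod_singleton]
      simp [hr, (hconst j hj l hl).2 α]
    have := hΔeq r hsupp
    simp only [hTr, hTbr, ← Finset.mul_sum] at this
    rwa [hp1, hpbar1, mul_one, mul_one] at this
  refine ⟨key, ?_⟩
  intro r
  set r' : Fin J → ℕ := fun j => if j ∈ Δ then 0 else r j with hr'
  set c : ℝ := ∏ j ∈ Finset.univ.filter (fun j => r j ≠ 0 ∧ j ∈ Δ), θp j (r j) with hc
  have hcpos : 0 < c := by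
    apply Finset.prod_pos
    intro j hjm
    simp only [Finset.mem_filter] at hjm
    exact (hθ j hjm.2.2 (r j) (Nat.one_le_iff_ne_zero.mpr hjm.2.1)).1
  have hfil' : Finset.univ.filter (fun j => r' j ≠ 0)
      = Finset.univ.filter (fun j => r j ≠ 0 ∧ j ∉ Δ) := by
    ext j
    by_cases hjm : j ∈ Δ <;> simp [hr', hjm]
  have hsplit : ∀ α, T r α = c * T r' α := by
    intro α
    rw [hT, hT, hfil']
    rw [show Finset.univ.filter (fun j => r j ≠ 0)
        = Finset.univ.filter (fun j => r j ≠ 0 ∧ j ∈ Δ)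
          ∪ Finset.univ.filter (fun j => r j ≠ 0 ∧ j ∉ Δ) by
      ext j; by_cases hjm : j ∈ Δ <;> simp [hjm]]
    rw [Finset.prod_union (by
      rw [Finset.disjoint_left]; intro j h1 h2
      simp only [Finset.mem_filter] at h1 h2
      exact h2.2.2 h1.2.2)]
    congr 1
    · apply Finset.prod_congr rfl
      intro j hjm
      simp only [Finset.mem_filter] at hjm
      exact (hconst j hjm.2.2 (r j) (Nat.one_le_iff_ne_zero.mpr hjm.2.1)).1 α
    · apply Finset.prod_congr rfl
      intro j hjm
      simp only [Finset.mem_filter] at hjm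
      simp [hr', hjm.2.2]
  have hsplitb : ∀ α, Tb r α = c * Tb r' α := by
    intro α
    rw [hTb, hTb, hfil']
    rw [show Finset.univ.filter (fun j => r j ≠ 0)
        = Finset.univ.filter (fun j => r j ≠ 0 ∧ j ∈ Δ)
          ∪ Finset.univ.filter (fun j => r j ≠ 0 ∧ j ∉ Δ) by
      ext j; by_cases hjm : j ∈ Δ <;> simp [hjm]]
    rw [Finset.prod_union (by
      rw [Finset.disjoint_left]; intro j h1 h2
      simp only [Finset.mem_filter] at h1 h2
      exact h2.2.2 h1.2.2)]
    congr 1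
    · rw [hc]
      apply Finset.prod_congr rfl
      intro j hjm
      simp only [Finset.mem_filter] at hjm
      rw [(hconst j hjm.2.2 (r j) (Nat.one_le_iff_ne_zero.mpr hjm.2.1)).2 α,
        key j hjm.2.2 (r j) (Nat.one_le_iff_ne_zero.mpr hjm.2.1)]
    · apply Finset.prod_congr rfl
      intro j hjm
      simp only [Finset.mem_filter] at hjm
      simp [hr', hjm.2.2]
  simp only [hsplit, hsplitb, mul_assoc, ← Finset.mul_sum]
  exact ⟨fun h => mul_left_cancel₀ (ne_of_gt hcpos) h, fun h => by rw [h]⟩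
end
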